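/- For every ε ∈ (0, 1/8) and α > 0, there exists C_ε such that for all r > 1: ∫₀^∞ t^{−3/2}(r + t) exp(−r²/(4t) − α²t + εr/t) dt ≤ C_ε e^{−αr}. -/

import Mathlib

/-! Completing the square, `-p²/t - q²t = -2pq - (p t^{-1/2} - q t^{1/2})²`, and substituting
`u = p t^{-1/2} - q t^{1/2}`, whose derivative is `-(p t^{-3/2} + q t^{-1/2}) / 2`, turns
`∫₀^∞ (p t^{-3/2} + q t^{-1/2}) exp(-p²/t - q²t) dt` into `2 e^{-2pq}` times a Gaussian integral
over part of `ℝ`, so it is at most `2 √π e^{-2pq}`. With `p² = r²/4 - εr` and `q = α` the exponent is exactly the one of the theorem;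
`ε < 1/8` gives `r ≤ 3p`, so the weight `t^{-3/2}(r + t)` is at most
`(3 + α⁻¹)(p t^{-3/2} + α t^{-1/2})`, and `2p ≥ r - 4ε` gives `e^{-2pα} ≤ e^{4αε} e^{-αr}`. -/

open MeasureTheory Set Real

section

variable {p q t : ℝ}

lemma neg_div_sub_mul_eq_neg_two_mul_sub_sq (ht : 0 < t) :
    -p ^ 2 / t - q ^ 2 * t = -(2 * p * q) - (p * t ^ (-(1:ℝ)/2) - q * t ^ ((1:ℝ)/2)) ^ 2 := by
  have hs : (t ^ ((1:ℝ)/2)) ^ 2 = t := by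
    rw [← rpow_natCast, ← rpow_mul ht.le]; norm_num
  have hs' : t ^ (-(1:ℝ)/2) = (t ^ ((1:ℝ)/2))⁻¹ := by
    rw [← rpow_neg ht.le]; norm_num
  have hpos : 0 < t ^ ((1:ℝ)/2) := rpow_pos_of_pos ht _
  rw [hs']
  nth_rewrite 1 [← hs]; nth_rewrite 2 [← hs]
  field_simp
  ring

lemma hasDerivAt_mul_rpow_neg_half_sub (ht : 0 < t) :
    HasDerivAt (fun t : ℝ ↦ p * t ^ (-(1:ℝ)/2) - q * t ^ ((1:ℝ)/2))
      (-(p * t ^ (-(3:ℝ)/2) + q * t ^ (-(1:ℝ)/2)) / 2) t := by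
  have h₁ := (hasDerivAt_rpow_const (p := -(1:ℝ)/2) (Or.inl ht.ne')).const_mul p
  have h₂ := (hasDerivAt_rpow_const (p := (1:ℝ)/2) (Or.inl ht.ne')).const_mul q
  refine (h₁.sub h₂).congr_deriv ?_
  norm_num
  ring

lemma strictAntiOn_mul_rpow_neg_half_sub (hp : 0 ≤ p) (hq : 0 < q) :
    StrictAntiOn (fun t : ℝ ↦ p * t ^ (-(1:ℝ)/2) - q * t ^ ((1:ℝ)/2)) (Ioi 0) := by
  intro s hs t ht hst
  have h₁ : t ^ (-(1:ℝ)/2) ≤ s ^ (-(1:ℝ)/2) := rpow_le_rpow_of_nonpos hs hst.le (by norm_num)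
  have h₂ : s ^ ((1:ℝ)/2) < t ^ ((1:ℝ)/2) := rpow_lt_rpow (le_of_lt hs) hst (by norm_num)
  dsimp only
  nlinarith [mul_le_mul_of_nonneg_left h₁ hp, mul_lt_mul_of_pos_left h₂ hq]

lemma lintegral_ofReal_exp_neg_sq :
    ∫⁻ u : ℝ, ENNReal.ofReal (exp (-u ^ 2)) = ENNReal.ofReal √π := by
  rw [← ofReal_integral_eq_lintegral_ofReal]
  · congr 1
    simpa using integral_gaussian 1
  · simpa using integrable_exp_neg_mul_sq one_pos
  · exact Filter.Eventually.of_forall fun u ↦ (exp_pos _).le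

theorem lintegral_Ioi_exp_neg_div_sub_mul_le (hp : 0 ≤ p) (hq : 0 < q) :
    ∫⁻ t in Ioi 0, ENNReal.ofReal
        ((p * t ^ (-(3:ℝ)/2) + q * t ^ (-(1:ℝ)/2)) * exp (-p ^ 2 / t - q ^ 2 * t)) ≤
      ENNReal.ofReal (2 * √π * exp (-(2 * p * q))) := by
  set φ : ℝ → ℝ := fun t ↦ p * t ^ (-(1:ℝ)/2) - q * t ^ ((1:ℝ)/2)
  set φ' : ℝ → ℝ := fun t ↦ -(p * t ^ (-(3:ℝ)/2) + q * t ^ (-(1:ℝ)/2)) / 2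
  have hφ : ∀ t ∈ Ioi (0:ℝ), HasDerivWithinAt φ (φ' t) (Ioi 0) t := fun t ht ↦
    (hasDerivAt_mul_rpow_neg_half_sub ht).hasDerivWithinAt
  have hchange := lintegral_image_eq_lintegral_abs_deriv_mul measurableSet_Ioi hφ
    (strictAntiOn_mul_rpow_neg_half_sub hp hq).injOn fun u ↦ ENNReal.ofReal (exp (-u ^ 2))
  have hintegrand : ∀ t ∈ Ioi (0:ℝ), ENNReal.ofReal
      ((p * t ^ (-(3:ℝ)/2) + q * t ^ (-(1:ℝ)/2)) * exp (-p ^ 2 / t - q ^ 2 * t)) =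
      ENNReal.ofReal (2 * exp (-(2 * p * q))) *
        (ENNReal.ofReal |φ' t| * ENNReal.ofReal (exp (-φ t ^ 2))) := by
    intro t ht
    have hw : 0 ≤ p * t ^ (-(3:ℝ)/2) + q * t ^ (-(1:ℝ)/2) := by
      have := rpow_pos_of_pos (mem_Ioi.mp ht) (-(3:ℝ)/2)
      have := rpow_pos_of_pos (mem_Ioi.mp ht) (-(1:ℝ)/2)
      positivity
    rw [← ENNReal.ofReal_mul (abs_nonneg _), ← ENNReal.ofReal_mul (by positivity),
      neg_div_sub_mul_eq_neg_two_mul_sub_sq ht, abs_of_nonpos (by simp only [φ']; linarith),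
      sub_eq_add_neg, exp_add]
    congr 1
    simp only [φ', φ]
    ring
  calc _ = ∫⁻ t in Ioi 0, ENNReal.ofReal (2 * exp (-(2 * p * q))) *
        (ENNReal.ofReal |φ' t| * ENNReal.ofReal (exp (-φ t ^ 2))) :=
        setLIntegral_congr_fun measurableSet_Ioi hintegrand
    _ = ENNReal.ofReal (2 * exp (-(2 * p * q))) *
          ∫⁻ u in φ '' Ioi 0, ENNReal.ofReal (exp (-u ^ 2)) := by
        rw [lintegral_const_mul' _ _ ENNReal.ofReal_ne_top, hchange]
    _ ≤ ENNReal.ofReal (2 * exp (-(2 * p * q))) * ENNReal.ofReal √π := by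
        gcongr
        exact (setLIntegral_le_lintegral _ _).trans lintegral_ofReal_exp_neg_sq.le
    _ = ENNReal.ofReal (2 * √π * exp (-(2 * p * q))) := by
        rw [← ENNReal.ofReal_mul (by positivity)]
        ring_nf
end
section

variable {ε r : ℝ}

lemma sub_le_two_mul_sqrt (hε : 0 ≤ ε) (hr : 4 * ε ≤ r) :
    r - 4 * ε ≤ 2 * √(r ^ 2 / 4 - ε * r) := by
  rw [← div_le_iff₀' two_pos]
  exact le_sqrt_of_sq_le (by nlinarith)

lemma le_three_mul_sqrt (hε : 0 ≤ ε) (hr : 8 * ε ≤ r) : r ≤ 3 * √(r ^ 2 / 4 - ε * r) := by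
  rw [← div_le_iff₀' three_pos]
  exact le_sqrt_of_sq_le (by nlinarith)

lemma rpow_mul_add_mul_exp_le {α t : ℝ} (hε : 0 ≤ ε) (hr : 8 * ε ≤ r) (hα : 0 < α)
    (ht : 0 < t) :
    t ^ (-(3:ℝ)/2) * (r + t) * exp (-r ^ 2 / (4 * t) - α ^ 2 * t + ε * r / t) ≤
      (3 + α⁻¹) * ((√(r ^ 2 / 4 - ε * r) * t ^ (-(3:ℝ)/2) + α * t ^ (-(1:ℝ)/2)) *
        exp (-√(r ^ 2 / 4 - ε * r) ^ 2 / t - α ^ 2 * t)) := by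
  set p := √(r ^ 2 / 4 - ε * r)
  have hp : 0 ≤ p := sqrt_nonneg _
  have hexponent : -r ^ 2 / (4 * t) - α ^ 2 * t + ε * r / t = -p ^ 2 / t - α ^ 2 * t := by
    rw [sq_sqrt (by nlinarith)]
    field_simp
    ring
  have hsplit : t ^ (-(3:ℝ)/2) * (r + t) = r * t ^ (-(3:ℝ)/2) + t ^ (-(1:ℝ)/2) := by
    rw [show (-(1:ℝ)/2) = -(3:ℝ)/2 + 1 by norm_num, rpow_add_one ht.ne']
    ring
  have hw₁ := rpow_pos_of_pos ht (-(3:ℝ)/2)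
  have hw₂ := rpow_pos_of_pos ht (-(1:ℝ)/2)
  have hr3 := le_three_mul_sqrt hε hr
  rw [hexponent, hsplit, ← mul_assoc]
  gcongr
  calc r * t ^ (-(3:ℝ)/2) + t ^ (-(1:ℝ)/2)
      ≤ 3 * p * t ^ (-(3:ℝ)/2) + α⁻¹ * α * t ^ (-(1:ℝ)/2) := by
        rw [inv_mul_cancel₀ hα.ne', one_mul]; gcongr
    _ ≤ _ := by
        have : 0 < α⁻¹ := inv_pos.mpr hα
        nlinarith [mul_nonneg (mul_nonneg this.le hp) hw₁.le, mul_pos (mul_pos three_pos hα) hw₂]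
end

/-- For `ε ∈ (0,1/8)` and `α > 0` there is `C_ε` with
`∫₀^∞ t^{-3/2}(r+t) exp(−r²/(4t) − α²t + εr/t) dt ≤ C_ε e^{−αr}` for all `r > 1`. -/
theorem stmt17 (ε α : ℝ) (hε₀ : 0 < ε) (hε₁ : ε < 1 / 8) (hα : 0 < α) :
    ∃ C : ℝ, ∀ r : ℝ, 1 < r →
      ∫⁻ t in Ioi (0:ℝ),
          ENNReal.ofReal (t ^ (-(3:ℝ)/2) * (r + t) *
            Real.exp (-r ^ 2 / (4 * t) - α ^ 2 * t + ε * r / t)) ≤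
        ENNReal.ofReal (C * Real.exp (-α * r)) := by
  refine ⟨(3 + α⁻¹) * (2 * √π * exp (4 * α * ε)), fun r hr ↦ ?_⟩
  have h8ε : 8 * ε ≤ r := by linarith
  set p := √(r ^ 2 / 4 - ε * r)
  have hdecay : exp (-(2 * p * α)) ≤ exp (4 * α * ε) * exp (-α * r) := by
    rw [← exp_add, exp_le_exp]
    nlinarith [sub_le_two_mul_sqrt hε₀.le (by linarith : 4 * ε ≤ r)]
  calc _ ≤ ∫⁻ t in Ioi (0:ℝ), ENNReal.ofReal (3 + α⁻¹) * ENNReal.ofReal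
          ((p * t ^ (-(3:ℝ)/2) + α * t ^ (-(1:ℝ)/2)) * exp (-p ^ 2 / t - α ^ 2 * t)) := by
        refine setLIntegral_mono' measurableSet_Ioi fun t ht ↦ ?_
        rw [← ENNReal.ofReal_mul (by positivity)]
        exact ENNReal.ofReal_le_ofReal (rpow_mul_add_mul_exp_le hε₀.le h8ε hα ht)
    _ ≤ ENNReal.ofReal (3 + α⁻¹) * ENNReal.ofReal (2 * √π * exp (-(2 * p * α))) := by
        rw [lintegral_const_mul' _ _ ENNReal.ofReal_ne_top]
        gcongr
        exact lintegral_Ioi_exp_neg_div_sub_mul_le (sqrt_nonneg _) hα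
    _ ≤ _ := by
        rw [← ENNReal.ofReal_mul (by positivity)]
        apply ENNReal.ofReal_le_ofReal
        have := mul_le_mul_of_nonneg_left hdecay (by positivity : 0 ≤ (3 + α⁻¹) * (2 * √π))
        linarith
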